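/- arXiv:2601.02660 — 3 statements merged into one kernel-verified Lean document; each statement's English description precedes it below -/
import Mathlib

section
/- Let {Mᵢ} = {|0⟩⟨0|, |1⟩⟨0|, |e₀⟩⟨1|, |e₁⟩⟨1|} be 2×2 matrices (so {|Mᵢ⟩⟩} is a product orthonormal basis of ℂ²⊗ℂ²), let R be a rank-2 (entangled) 2×2 matrix, and suppose there is some index b with B_b invertible among the operators of a rank-1 non-redundant localization (A_a R* B_b ∝ M_{f(a,b)} for all a,b, with {|A_a⟩⟩⟨⟨A_a|}, {|B_b⟩⟩⟨⟨B_b|} POVMs). Then {|e₀⟩⟨e₀|, |e₁⟩⟨e₁|} = {|0⟩⟨0|, |1⟩⟨1|}. -/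
open Matrix

noncomputable section

/-- The rank-1 operator `|M⟩⟩⟨⟨M|` on `ℂ² ⊗ ℂ²` associated with a `2×2` matrix `M`. -/
def dop (M : Matrix (Fin 2) (Fin 2) ℂ) :
    Matrix (Fin 2 × Fin 2) (Fin 2 × Fin 2) ℂ :=
  Matrix.of fun p q => M p.1 p.2 * star (M q.1 q.2)

lemma no_perp {I : Type} [Fintype I] (F : I → Matrix (Fin 2) (Fin 2) ℂ)
    (h : ∑ i, dop (F i) = 1) (x : Fin 2 × Fin 2 → ℂ)
    (hx : ∀ i, ∑ q : Fin 2 × Fin 2, star (F i q.1 q.2) * x q = 0) : x = 0 := by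
  funext p
  have h1 : ∑ q : Fin 2 × Fin 2, (∑ i, dop (F i)) p q * x q
      = ∑ q : Fin 2 × Fin 2, (1 : Matrix (Fin 2 × Fin 2) (Fin 2 × Fin 2) ℂ) p q * x q := by
    rw [h]
  have h2 : ∑ q : Fin 2 × Fin 2, (1 : Matrix (Fin 2 × Fin 2) (Fin 2 × Fin 2) ℂ) p q * x q = x p := by
    simp [Matrix.one_apply]
  rw [h2] at h1
  rw [← h1]
  simp only [Matrix.sum_apply, Finset.sum_mul, dop, Matrix.of_apply]
  rw [Finset.sum_comm]
  simp only [Pi.zero_apply]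
  calc ∑ i, ∑ q : Fin 2 × Fin 2, F i p.1 p.2 * star (F i q.1 q.2) * x q
      = ∑ i, F i p.1 p.2 * ∑ q : Fin 2 × Fin 2, star (F i q.1 q.2) * x q := by
        simp [Finset.mul_sum, mul_assoc]
    _ = 0 := by simp only [Complex.star_def] at hx; simp [hx]

lemma det_ne_of_rank2 (R : Matrix (Fin 2) (Fin 2) ℂ) (hR : R.rank = 2) : R.det ≠ 0 := by
  intro hdet
  obtain ⟨v, hv, hRv⟩ := (Matrix.exists_mulVec_eq_zero_iff).2 hdet
  have hk : 0 < Module.finrank ℂ (LinearMap.ker R.mulVecLin) := by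
    have : v ∈ LinearMap.ker R.mulVecLin := by simpa [Matrix.mulVecLin] using hRv
    have hne : LinearMap.ker R.mulVecLin ≠ ⊥ := by
      intro hbot
      rw [hbot] at this
      exact hv (by simpa using this)
    rw [Module.finrank_pos_iff]
    exact Submodule.nontrivial_iff_ne_bot.2 hne
  have := LinearMap.finrank_range_add_finrank_ker R.mulVecLin
  rw [show Module.finrank ℂ (LinearMap.range R.mulVecLin) = R.rank from rfl, hR] at this
  have h2 : Module.finrank ℂ (Fin 2 → ℂ) = 2 := by simp
  omega

/-- For the product basis `{Mᵢ} = {|0⟩⟨0|, |1⟩⟨0|, |e₀⟩⟨1|, |e₁⟩⟨1|}` localized by an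
entangled (rank-2) resource `R` via a rank-1 non-redundant localization in which some
`B_b` is invertible, the basis `{|e₀⟩, |e₁⟩}` must be the computational basis:
`{|e₀⟩⟨e₀|, |e₁⟩⟨e₁|} = {|0⟩⟨0|, |1⟩⟨1|}`. -/
theorem product_basis_localization_Binv_case
    {X Y : Type} [Fintype X] [Fintype Y]
    (e : Fin 2 → Fin 2 → ℂ)
    (he : ∀ i j, ∑ p : Fin 2, star (e i p) * e j p = if i = j then 1 else 0)
    (M : Fin 4 → Matrix (Fin 2) (Fin 2) ℂ)
    (hM : M = ![!![1, 0; 0, 0], !![0, 0; 1, 0],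
      Matrix.of fun i j => e 0 i * (if j = 1 then 1 else 0),
      Matrix.of fun i j => e 1 i * (if j = 1 then 1 else 0)])
    (R : Matrix (Fin 2) (Fin 2) ℂ) (hR : R.rank = 2)
    (A : X → Matrix (Fin 2) (Fin 2) ℂ) (B : Y → Matrix (Fin 2) (Fin 2) ℂ)
    (f : X → Y → Fin 4)
    (hA : ∑ a, dop (A a) = 1) (hB : ∑ b, dop (B b) = 1)
    (hA1 : ∀ a, A a ≠ 0) (hB1 : ∀ b, B b ≠ 0)
    (hAnr : ∀ a a', (∃ α : ℂ, A a = α • A a') → a = a')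
    (hBnr : ∀ b b', (∃ α : ℂ, B b = α • B b') → b = b')
    (hBinv : ∃ b, IsUnit (B b))
    (hloc : ∀ a b, ∃ α : ℂ, A a * R.map star * B b = α • M (f a b)) :
    ({Matrix.of fun i j => e 0 i * star (e 0 j),
      Matrix.of fun i j => e 1 i * star (e 1 j)} : Set (Matrix (Fin 2) (Fin 2) ℂ)) =
      {!![1, 0; 0, 0], !![0, 0; 0, 1]} := by
  obtain ⟨b₀, hUB⟩ := hBinv
  set S := R.map star with hSdef
  have hUBdet : IsUnit (B b₀).det := (Matrix.isUnit_iff_isUnit_det _).1 hUB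
  have hUSdet : IsUnit S.det := by
    have h1 : S.det = (starRingEnd ℂ) R.det := (RingHom.map_det (starRingEnd ℂ) R).symm
    rw [h1, isUnit_iff_ne_zero]
    simpa using det_ne_of_rank2 R hR
  set T := (B b₀)⁻¹ * S⁻¹ with hTdef
  -- step: A a = α • (M (f a b₀) * T)
  have hAa : ∀ a, ∃ α : ℂ, α ≠ 0 ∧ A a = α • (M (f a b₀) * T) := by
    intro a
    obtain ⟨α, hα⟩ := hloc a b₀
    refine ⟨α, ?_, ?_⟩
    · rintro rfl
      apply hA1 a
      have : A a * S * B b₀ = 0 := by rw [hα, zero_smul]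
      have h2 := congrArg (fun Z => Z * (B b₀)⁻¹ * S⁻¹) this
      simpa [Matrix.mul_assoc, Matrix.mul_nonsing_inv _ hUBdet, Matrix.mul_nonsing_inv _ hUSdet]
        using h2
    · have h2 := congrArg (fun Z => Z * (B b₀)⁻¹ * S⁻¹) hα
      simpa [Matrix.mul_assoc, Matrix.mul_nonsing_inv _ hUBdet, Matrix.mul_nonsing_inv _ hUSdet,
        Matrix.smul_mul, hTdef] using h2
  -- entry formula for M j * N
  set u : Fin 4 → Fin 2 → ℂ :=
    ![fun p => if p = 0 then 1 else 0, fun p => if p = 1 then 1 else 0, e 0, e 1] with hu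
  set vv : Fin 4 → Fin 2 := ![0, 0, 1, 1] with hvv
  have hMmul : ∀ (j : Fin 4) (N : Matrix (Fin 2) (Fin 2) ℂ) (p q : Fin 2),
      (M j * N) p q = u j p * N (vv j) q := by
    intro j N p q
    fin_cases j <;> fin_cases p <;>
      simp [hM, hu, hvv, Matrix.mul_apply, Fin.sum_univ_two]
  have hUTdet : IsUnit T.det := by
    rw [hTdef, Matrix.det_mul]
    exact ((B b₀).isUnit_nonsing_inv_det hUBdet).mul (S.isUnit_nonsing_inv_det hUSdet)
  -- every row of T is nonzero
  have hrow : ∀ i : Fin 2, ¬ (T i 0 = 0 ∧ T i 1 = 0) := by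
    intro i ⟨h0, h1⟩
    have h2 := congrFun (congrFun (Matrix.mul_nonsing_inv T hUTdet) i) i
    rw [Matrix.mul_apply, Fin.sum_univ_two, h0, h1] at h2
    simp [Matrix.one_apply] at h2
  -- both values of vv are attained by a ↦ f a b₀
  have hex : ∀ k : Fin 2, ∃ a, vv (f a b₀) = k := by
    intro k
    by_contra hc
    push_neg at hc
    have fin2 : ∀ m k : Fin 2, m ≠ k → m = 1 - k := by decide
    have hc' : ∀ a, vv (f a b₀) = 1 - k := fun a => fin2 _ _ (hc a)
    set z : Fin 2 → ℂ := ![star (T (1 - k) 1), -star (T (1 - k) 0)] with hz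
    have hx0 : (fun q : Fin 2 × Fin 2 => z q.2) = 0 := by
      apply no_perp A hA
      intro a
      obtain ⟨α, hα0, hα⟩ := hAa a
      rw [Fintype.sum_prod_type]
      have hterm : ∀ p q : Fin 2, star (A a p q) * z q
          = star α * star (u (f a b₀) p) * (star (T (1 - k) q) * z q) := by
        intro p q
        rw [hα]
        have : (α • (M (f a b₀) * T)) p q = α * (u (f a b₀) p * T (vv (f a b₀)) q) := by
          rw [Matrix.smul_apply, hMmul]
          simp
        rw [this, hc' a]
        simp only [star_mul']
        ring
      have hzsum : ∑ q : Fin 2, star (T (1 - k) q) * z q = 0 := by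
        rw [Fin.sum_univ_two, hz]
        simp
        ring
      calc ∑ p : Fin 2, ∑ q : Fin 2, star (A a p q) * z q
          = ∑ p : Fin 2, (star α * star (u (f a b₀) p)) * ∑ q : Fin 2, star (T (1 - k) q) * z q := by
            refine Finset.sum_congr rfl fun p _ => ?_
            rw [Finset.mul_sum]
            exact Finset.sum_congr rfl fun q _ => by rw [hterm]
        _ = 0 := by rw [hzsum]; simp
    apply hrow (1 - k)
    constructor
    · have := congrFun hx0 (0, 1)
      simp [hz] at this
      simpa using this
    · have := congrFun hx0 (0, 0)
      simp [hz] at this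
      simpa using this
  have hMapp : ∀ (j : Fin 4) (p q : Fin 2), M j p q = u j p * (if q = vv j then 1 else 0) := by
    intro j p q
    fin_cases j <;> fin_cases p <;> fin_cases q <;> simp [hM, hu, hvv]
  have hTS : T * S = (B b₀)⁻¹ := by
    rw [hTdef, Matrix.mul_assoc, Matrix.nonsing_inv_mul _ hUSdet, Matrix.mul_one]
  have hEQ : ∀ a b, ∃ α β : ℂ, α ≠ 0 ∧ ∀ p q : Fin 2,
      α * (u (f a b₀) p * ((B b₀)⁻¹ * B b) (vv (f a b₀)) q)
        = β * (u (f a b) p * (if q = vv (f a b) then 1 else 0)) := by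
    intro a b
    obtain ⟨α, hα0, hαa⟩ := hAa a
    obtain ⟨β, hβ⟩ := hloc a b
    refine ⟨α, β, hα0, fun p q => ?_⟩
    have h1 : A a * S * B b = α • (M (f a b₀) * ((B b₀)⁻¹ * B b)) := by
      rw [hαa, Matrix.smul_mul, Matrix.smul_mul, Matrix.mul_assoc (M _) T S, hTS,
        Matrix.mul_assoc]
    have h2 : (α • (M (f a b₀) * ((B b₀)⁻¹ * B b))) p q = (β • M (f a b)) p q := by
      rw [← h1, hβ]
    rw [Matrix.smul_apply, Matrix.smul_apply, hMmul, hMapp, smul_eq_mul, smul_eq_mul] at h2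
    exact h2
  have fin2' : ∀ m : Fin 2, m = 0 ∨ m = 1 := by decide
  have fact0 : ∀ i : Fin 4, vv i = 0 → i = 0 ∨ i = 1 := by
    intro i hi
    rw [hvv] at hi
    fin_cases i <;> revert hi <;> decide
  have fact1 : ∀ i : Fin 4, vv i = 1 → i = 2 ∨ i = 3 := by
    intro i hi
    rw [hvv] at hi
    fin_cases i <;> revert hi <;> decide
  have hkey : e 0 0 = 0 ∨ e 0 1 = 0 := by
    by_contra hcon
    push_neg at hcon
    obtain ⟨h00, h01⟩ := hcon
    have horth := he 1 0
    rw [Fin.sum_univ_two] at horth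
    simp only [if_neg (by decide : ¬ (1 : Fin 2) = 0)] at horth
    have hn1 := he 1 1
    rw [Fin.sum_univ_two] at hn1
    simp only [if_pos rfl] at hn1
    have h10 : e 1 0 ≠ 0 := by
      intro h
      rw [h] at horth hn1
      simp at horth hn1
      rw [horth.resolve_right h01] at hn1
      simp at hn1
    have h11 : e 1 1 ≠ 0 := by
      intro h
      rw [h] at horth hn1
      simp at horth hn1
      rw [horth.resolve_right h00] at hn1
      simp at hn1
    have u00 : u 0 0 = 1 := by simp [hu]
    have u01 : u 0 1 = 0 := by simp [hu]
    have u10 : u 1 0 = 0 := by simp [hu]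
    have u11 : u 1 1 = 1 := by simp [hu]
    have hu2 : ∀ p, u 2 p = e 0 p := fun p => by simp [hu]
    have hu3 : ∀ p, u 3 p = e 1 p := fun p => by simp [hu]
    have hz3 : ∀ (x y z : ℂ), x ≠ 0 → y ≠ 0 → x * (y * z) = 0 → z = 0 := by
      intro x y z hx hy h
      rcases mul_eq_zero.1 h with h | h
      · exact absurd h hx
      rcases mul_eq_zero.1 h with h | h
      · exact absurd h hy
      · exact h
    -- every (B b₀)⁻¹ * B b is diagonal
    have hCdiag : ∀ b, ((B b₀)⁻¹ * B b) 0 1 = 0 ∧ ((B b₀)⁻¹ * B b) 1 0 = 0 := by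
      intro b
      constructor
      · obtain ⟨a, ha⟩ := hex 0
        obtain ⟨α, β, hα0, hEQ'⟩ := hEQ a b
        rw [ha] at hEQ'
        rcases fact0 _ ha with hi | hi <;> rw [hi] at hEQ' <;>
          rcases fin2' (vv (f a b)) with hj | hj
        · have h := hEQ' 0 1
          rw [u00, one_mul, hj, if_neg (by decide : ¬ (1 : Fin 2) = 0), mul_zero, mul_zero] at h
          exact (mul_eq_zero.1 h).resolve_left hα0
        · rw [hj] at hEQ'
          have hβ0 : β = 0 := by
            have h := hEQ' 1 1
            rw [u01, zero_mul, mul_zero, if_pos (rfl : (1 : Fin 2) = 1), mul_one] at h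
            rcases fact1 _ hj with hfj | hfj <;> rw [hfj] at h
            · rw [hu2] at h
              exact (mul_eq_zero.1 h.symm).resolve_right h01
            · rw [hu3] at h
              exact (mul_eq_zero.1 h.symm).resolve_right h11
          have h := hEQ' 0 1
          rw [u00, one_mul, hβ0, zero_mul] at h
          exact (mul_eq_zero.1 h).resolve_left hα0
        · have h := hEQ' 1 1
          rw [u11, one_mul, hj, if_neg (by decide : ¬ (1 : Fin 2) = 0), mul_zero, mul_zero] at h
          exact (mul_eq_zero.1 h).resolve_left hα0
        · rw [hj] at hEQ'
          have hβ0 : β = 0 := by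
            have h := hEQ' 0 1
            rw [u10, zero_mul, mul_zero, if_pos (rfl : (1 : Fin 2) = 1), mul_one] at h
            rcases fact1 _ hj with hfj | hfj <;> rw [hfj] at h
            · rw [hu2] at h
              exact (mul_eq_zero.1 h.symm).resolve_right h00
            · rw [hu3] at h
              exact (mul_eq_zero.1 h.symm).resolve_right h10
          have h := hEQ' 1 1
          rw [u11, one_mul, hβ0, zero_mul] at h
          exact (mul_eq_zero.1 h).resolve_left hα0
      · obtain ⟨a, ha⟩ := hex 1
        obtain ⟨α, β, hα0, hEQ'⟩ := hEQ a b
        rw [ha] at hEQ'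
        rcases fin2' (vv (f a b)) with hj | hj
        · rw [hj] at hEQ'
          rcases fact1 _ ha with hfi | hfi <;> rw [hfi] at hEQ' <;>
            rcases fact0 _ hj with hfj | hfj <;> rw [hfj] at hEQ'
          · have h := hEQ' 1 0
            rw [hu2, u01, zero_mul, mul_zero] at h
            exact hz3 _ _ _ hα0 h01 h
          · have h := hEQ' 0 0
            rw [hu2, u10, zero_mul, mul_zero] at h
            exact hz3 _ _ _ hα0 h00 h
          · have h := hEQ' 1 0
            rw [hu3, u01, zero_mul, mul_zero] at h
            exact hz3 _ _ _ hα0 h11 h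
          · have h := hEQ' 0 0
            rw [hu3, u10, zero_mul, mul_zero] at h
            exact hz3 _ _ _ hα0 h10 h
        · rw [hj] at hEQ'
          rcases fact1 _ ha with hfi | hfi <;> rw [hfi] at hEQ'
          · have h := hEQ' 0 0
            rw [hu2, if_neg (by decide : ¬ (0 : Fin 2) = 1), mul_zero, mul_zero] at h
            exact hz3 _ _ _ hα0 h00 h
          · have h := hEQ' 0 0
            rw [hu3, if_neg (by decide : ¬ (0 : Fin 2) = 1), mul_zero, mul_zero] at h
            exact hz3 _ _ _ hα0 h10 h
    -- contradiction with hB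
    have hBb : ∀ b (p : Fin 2), B b p 0 = B b₀ p 0 * ((B b₀)⁻¹ * B b) 0 0 := by
      intro b p
      have h1 : B b = B b₀ * ((B b₀)⁻¹ * B b) := by
        rw [← Matrix.mul_assoc, Matrix.mul_nonsing_inv _ hUBdet, Matrix.one_mul]
      calc B b p 0 = (B b₀ * ((B b₀)⁻¹ * B b)) p 0 := by rw [← h1]
        _ = B b₀ p 0 * ((B b₀)⁻¹ * B b) 0 0 + B b₀ p 1 * ((B b₀)⁻¹ * B b) 1 0 := by
            rw [Matrix.mul_apply, Fin.sum_univ_two]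
        _ = B b₀ p 0 * ((B b₀)⁻¹ * B b) 0 0 := by rw [(hCdiag b).2]; ring
    set y : Fin 2 → ℂ := ![star (B b₀ 1 0), -star (B b₀ 0 0)] with hy
    have hx0 : (fun q : Fin 2 × Fin 2 => if q.2 = 0 then y q.1 else 0) = 0 := by
      apply no_perp B hB
      intro b
      rw [Fintype.sum_prod_type]
      simp only [Fin.sum_univ_two, if_pos rfl, if_neg (by decide : ¬ (1 : Fin 2) = 0),
        mul_zero, add_zero]
      rw [hBb b 0, hBb b 1]
      simp only [hy, star_mul']
      simp
      ring
    have hy0 := congrFun hx0 (0, 0)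
    have hy1 := congrFun hx0 (1, 0)
    simp [hy] at hy0 hy1
    have hcol : B b₀ 0 0 = 0 ∧ B b₀ 1 0 = 0 := by
      constructor
      · simpa using congrArg star hy1
      · simpa using congrArg star hy0
    have h1 := congrFun (congrFun (Matrix.nonsing_inv_mul _ hUBdet) 0) 0
    rw [Matrix.mul_apply, Fin.sum_univ_two, hcol.1, hcol.2] at h1
    simp [Matrix.one_apply] at h1
  have hs00 := he 0 0
  have hs01 := he 0 1
  have hs11 := he 1 1
  rw [Fin.sum_univ_two] at hs00 hs01 hs11
  rw [if_pos rfl] at hs00 hs11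
  rw [if_neg (by decide : ¬ (0 : Fin 2) = 1)] at hs01
  rcases hkey with hk | hk
  · -- e 0 0 = 0 : {|e₀⟩⟨e₀|, |e₁⟩⟨e₁|} = {|1⟩⟨1|, |0⟩⟨0|}
    rw [hk, star_zero, zero_mul, zero_add] at hs00 hs01
    have he01 : e 0 1 ≠ 0 := by
      intro h
      rw [h] at hs00
      simp at hs00
    have he11 : e 1 1 = 0 := by
      have := (mul_eq_zero.1 hs01).resolve_left (star_ne_zero.2 he01)
      exact this
    rw [he11, star_zero, mul_zero, add_zero] at hs11
    have hm0 : (Matrix.of fun i j => e 0 i * star (e 0 j)) = !![0, 0; 0, 1] := by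
      ext i j
      fin_cases i <;> fin_cases j
      · simp [hk]
      · simp [hk]
      · simp [hk]
      · simpa [mul_comm] using hs00
    have hm1 : (Matrix.of fun i j => e 1 i * star (e 1 j)) = !![1, 0; 0, 0] := by
      ext i j
      fin_cases i <;> fin_cases j
      · simpa [mul_comm] using hs11
      · simp [he11]
      · simp [he11]
      · simp [he11]
    rw [hm0, hm1, Set.pair_comm]
  · -- e 0 1 = 0
    rw [hk, star_zero, zero_mul, add_zero] at hs00 hs01
    have he00 : e 0 0 ≠ 0 := by
      intro h
      rw [h] at hs00
      simp at hs00
    have he10 : e 1 0 = 0 := (mul_eq_zero.1 hs01).resolve_left (star_ne_zero.2 he00)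
    rw [he10, star_zero, mul_zero, zero_add] at hs11
    have hm0 : (Matrix.of fun i j => e 0 i * star (e 0 j)) = !![1, 0; 0, 0] := by
      ext i j
      fin_cases i <;> fin_cases j
      · simpa [mul_comm] using hs00
      · simp [hk]
      · simp [hk]
      · simp [hk]
    have hm1 : (Matrix.of fun i j => e 1 i * star (e 1 j)) = !![0, 0; 0, 1] := by
      ext i j
      fin_cases i <;> fin_cases j
      · simp [he10]
      · simp [he10]
      · simp [he10]
      · simpa [mul_comm] using hs11
    rw [hm0, hm1]
end
end

section
/- The two-qubit rank-1 PVM given by the BB84 basis {|0⟩|0⟩, |0⟩|1⟩, |1⟩|+⟩, |1⟩|−⟩} can be localized by a two-qubit entangled resource state: there exist a pure state |R⟩⟩ on ℂ²⊗ℂ², rank-1 non-redundant POVMs {|A_a⟩⟩⟨⟨A_a|}, {|B_b⟩⟩⟨⟨B_b|}, and a function f, with A_a R* B_b ∝ M_{f(a,b)} for all a,b, where {Mᵢ} = {|0⟩⟨0|, |1⟩⟨0|, |+⟩⟨1|, |−⟩⟨1|}. -/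
open Matrix

noncomputable section

/-- The BB84 basis in double-ket form: `{Mᵢ} = {|0⟩⟨0|, |1⟩⟨0|, |+⟩⟨1|, |−⟩⟨1|}`,
so that `{|Mᵢ⟩⟩}` is the basis `{|0⟩|0⟩, |0⟩|1⟩, |1⟩|+⟩, |1⟩|−⟩}`. -/
def bb84 : Fin 4 → Matrix (Fin 2) (Fin 2) ℂ :=
  ![!![1, 0; 0, 0], !![0, 0; 1, 0],
    (Real.sqrt 2 : ℂ)⁻¹ • !![0, 1; 0, 1],
    (Real.sqrt 2 : ℂ)⁻¹ • !![0, 1; 0, -1]]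


/-! Take the maximally entangled resource `R = I/√2`, let Alice measure in the Pauli basis
`{I, X, Z, XZ}/√2` and Bob in the BB84 basis itself. Then `A_a R* B_b = ½ P_a M_b`, and the Paulis
permute the BB84 operators up to sign: `X` swaps `|0⟩, |1⟩` and fixes `|±⟩` up to sign, `Z` does
the opposite. Both measurement families are orthonormal for the Hilbert–Schmidt inner product,
which gives completeness (a square matrix with orthonormal columns has orthonormal rows) and
non-redundancy. -/

section HilbertSchmidt

variable {ι m n 𝕜 : Type*} [Fintype m] [Fintype n] [CommRing 𝕜] [StarRing 𝕜]

def hsGram (A : ι → Matrix m n 𝕜) : Matrix ι ι 𝕜 :=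
  of fun i j => ((A i)ᴴ * A j).trace

@[simp]
lemma hsGram_apply (A : ι → Matrix m n 𝕜) (i j : ι) :
    hsGram A i j = ((A i)ᴴ * A j).trace := rfl

lemma hsGram_smul (s : 𝕜) (A : ι → Matrix m n 𝕜) :
    hsGram (fun i => s • A i) = (star s * s) • hsGram A := by
  ext i j
  simp [smul_smul, mul_comm]

variable [DecidableEq ι] [Nontrivial 𝕜] {A : ι → Matrix m n 𝕜}

lemma ne_zero_of_hsGram_eq_one (hA : hsGram A = 1) (i : ι) : A i ≠ 0 := by
  intro h0
  simpa [h0] using congrFun (congrFun hA i) i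

lemma eq_of_eq_smul_of_hsGram_eq_one (hA : hsGram A = 1) {i j : ι} {α : 𝕜}
    (hij : A i = α • A j) : i = j := by
  by_contra hne
  have hα : α = 0 := by
    have hjj : ((A j)ᴴ * A j).trace = 1 := by simpa using congrFun (congrFun hA j) j
    simpa [hij, hjj, Ne.symm hne] using congrFun (congrFun hA j) i
  exact ne_zero_of_hsGram_eq_one hA i (by simp [hij, hα])

end HilbertSchmidt

lemma sum_dop_eq_one_of_hsGram_eq_one {ι : Type*} [Fintype ι] [DecidableEq ι]
    {A : ι → Matrix (Fin 2) (Fin 2) ℂ} (hA : hsGram A = 1) (hcard : Fintype.card ι = 4) :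
    ∑ i, dop (A i) = 1 := by
  let V : Matrix (Fin 2 × Fin 2) ι ℂ := of fun p i => A i p.1 p.2
  have hsum : ∑ i, dop (A i) = V * Vᴴ := by
    ext p q
    simp [V, dop, mul_apply, Matrix.sum_apply]
  have hgram : Vᴴ * V = hsGram A := by
    ext i j
    simp [V, mul_apply, trace, Fintype.sum_prod_type]
    ring
  rw [hsum]
  exact (mul_eq_one_comm_of_card_eq (Fin 2 × Fin 2) ι ℂ (by simp [hcard])).mpr (hgram.trans hA)

local notation "κ" => ((Real.sqrt 2 : ℂ))⁻¹

lemma star_inv_sqrt_two : star κ = κ := by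
  simp [← Complex.ofReal_inv]

lemma inv_sqrt_two_mul_self : κ * κ = 1 / 2 := by
  rw [← mul_inv, ← Complex.ofReal_mul, Real.mul_self_sqrt zero_le_two]
  norm_num

lemma inv_sqrt_two_ne_zero : κ ≠ 0 := by
  simp

def maxEntangled : Matrix (Fin 2) (Fin 2) ℂ :=
  κ • 1

lemma trace_conjTranspose_mul_self_maxEntangled : (maxEntangledᴴ * maxEntangled).trace = 1 := by
  simp [maxEntangled, ← mul_assoc, inv_sqrt_two_mul_self]

lemma rank_maxEntangled : maxEntangled.rank = 2 := by
  rw [maxEntangled,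
    rank_smul_of_mem_nonZeroDivisors _ (mem_nonZeroDivisors_of_ne_zero inv_sqrt_two_ne_zero),
    rank_one, Fintype.card_fin]

lemma map_star_maxEntangled : maxEntangled.map star = maxEntangled := by
  rw [← conjTranspose_transpose, maxEntangled, conjTranspose_smul, star_inv_sqrt_two]
  simp

def pauli : Fin 4 → Matrix (Fin 2) (Fin 2) ℂ :=
  ![1, !![0, 1; 1, 0], !![1, 0; 0, -1], !![0, -1; 1, 0]]

lemma hsGram_pauli : hsGram pauli = (2 : ℂ) • 1 := by
  ext i j
  fin_cases i <;> fin_cases j <;>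
    simp [pauli, trace, one_apply, mul_apply, Fin.sum_univ_two] <;> norm_num

lemma hsGram_inv_sqrt_two_smul_pauli : hsGram (fun a => κ • pauli a) = 1 := by
  rw [hsGram_smul, hsGram_pauli, star_inv_sqrt_two, inv_sqrt_two_mul_self, smul_smul]
  norm_num

lemma hsGram_bb84 : hsGram bb84 = 1 := by
  ext i j
  fin_cases i <;> fin_cases j <;>
    simp [bb84, trace, one_apply, mul_apply, Fin.sum_univ_two, inv_sqrt_two_mul_self] <;> norm_num

def bb84Pattern : Fin 4 → Fin 4 → Fin 4 :=
  ![![0, 1, 2, 3], ![1, 0, 2, 3], ![0, 1, 3, 2], ![1, 0, 3, 2]]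

lemma pauli_mul_bb84 (a b : Fin 4) :
    ∃ s : ℂ, pauli a * bb84 b = s • bb84 (bb84Pattern a b) := by
  fin_cases a <;> fin_cases b <;>
    first
    | refine ⟨1, ?_⟩; ext i j; fin_cases i <;> fin_cases j <;> simp [pauli, bb84, bb84Pattern]; done
    | refine ⟨-1, ?_⟩; ext i j; fin_cases i <;> fin_cases j <;> simp [pauli, bb84, bb84Pattern]

/-- The two-qubit rank-1 PVM given by the BB84 basis can be localized by a two-qubit
entangled resource state: there exist a pure entangled state `R` on `ℂ²⊗ℂ²`, rank-1
non-redundant POVMs `{|A_a⟩⟩⟨⟨A_a|}`, `{|B_b⟩⟩⟨⟨B_b|}`, and a pattern function `f`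
with `A_a R* B_b ∝ M_{f(a,b)}` for all `a, b`. -/
theorem bb84_localizable :
    ∃ (nx ny : ℕ) (A : Fin nx → Matrix (Fin 2) (Fin 2) ℂ)
      (B : Fin ny → Matrix (Fin 2) (Fin 2) ℂ)
      (R : Matrix (Fin 2) (Fin 2) ℂ)
      (f : Fin nx → Fin ny → Fin 4),
        (Rᴴ * R).trace = 1 ∧ 1 < R.rank ∧
        (∑ a, dop (A a)) = 1 ∧ (∑ b, dop (B b)) = 1 ∧
        (∀ a, A a ≠ 0) ∧ (∀ b, B b ≠ 0) ∧
        (∀ a a', (∃ α : ℂ, A a = α • A a') → a = a') ∧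
        (∀ b b', (∃ α : ℂ, B b = α • B b') → b = b') ∧
        ∀ a b, ∃ α : ℂ, A a * R.map star * B b = α • bb84 (f a b) := by
  have hA := hsGram_inv_sqrt_two_smul_pauli
  refine ⟨4, 4, fun a => κ • pauli a, bb84, maxEntangled, bb84Pattern,
    trace_conjTranspose_mul_self_maxEntangled, by rw [rank_maxEntangled]; norm_num,
    sum_dop_eq_one_of_hsGram_eq_one hA (Fintype.card_fin 4),
    sum_dop_eq_one_of_hsGram_eq_one hsGram_bb84 (Fintype.card_fin 4),
    ne_zero_of_hsGram_eq_one hA, ne_zero_of_hsGram_eq_one hsGram_bb84,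
    fun _ _ ⟨_, h⟩ => eq_of_eq_smul_of_hsGram_eq_one hA h,
    fun _ _ ⟨_, h⟩ => eq_of_eq_smul_of_hsGram_eq_one hsGram_bb84 h, fun a b => ?_⟩
  obtain ⟨s, hs⟩ := pauli_mul_bb84 a b
  refine ⟨κ * κ * s, ?_⟩
  rw [map_star_maxEntangled, maxEntangled, smul_mul_smul_comm, mul_one, smul_mul_assoc, hs,
    smul_smul]
end
end

section
/- For 2×2 matrices: if rank-1 matrices {A_a}_{a∈X} and {B_b}_{b∈Y} (all of rank exactly 1) span M₂(ℂ) each (via POVM completeness), R is any nonzero 2×2 matrix, and A_a R* B_b ∝ M_{f(a,b)} for the product family {Mᵢ} = {|0⟩⟨0|, |1⟩⟨0|, |e₀⟩⟨1|, |e₁⟩⟨1|}, then {|e₀⟩⟨e₀|, |e₁⟩⟨e₁|} = {|0⟩⟨0|, |1⟩⟨1|}. (Sketch: choose a with A_a R* ≠ 0; then the span of {M_{f(a,b)} : A_a R* B_b ≠ 0} equals {|x⟩⟨z| : |x⟩ ∈ range(A_a), z ∈ ℂ²}, a 2-dimensional space of matrices with fixed 1-dimensional range, forcing the stated conclusion.)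 -/
/-!
Pick `a` with `A_a R* ≠ 0` (the `A_a` span `M₂(ℂ)`, so they cannot all annihilate `R* ≠ 0`).
Since `A_a = x yᵀ` has rank one, every `A_a R* B_b` is of the form `x zᵀ`, and because the `B_b`
span `M₂(ℂ)`, for each column `c` some `A_a R* B_b` has a nonzero `c`-th column. Comparing with
`M_{f(a,b)}`, column `0` forces `x` to have a zero coordinate `l`, and column `1` forces `x ∝ e_m`
for some `m`, so `e_m l = 0`. For an orthonormal basis of `ℂ²` this pins `|e_m⟩⟨e_m|` to a
diagonal matrix unit, and `|e₀⟩⟨e₀| + |e₁⟩⟨e₁| = 1` then determines the other projector.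
-/

open Matrix

noncomputable section

theorem Matrix.exists_eq_vecMulVec_of_rank_le_one {m n K : Type*} [Fintype n] [DecidableEq n]
    [Field K] (A : Matrix m n K) (h : A.rank ≤ 1) : ∃ x y, A = vecMulVec x y := by
  obtain ⟨v, hv⟩ := finrank_le_one_iff.mp h
  choose y hy using fun j => hv ⟨A.col j, by
    rw [← mulVec_single_one]; exact LinearMap.mem_range_self _ _⟩
  refine ⟨v, y, ext fun i j => ?_⟩
  simpa [vecMulVec_apply, mul_comm] using (congrFun (congrArg Subtype.val (hy j)) i).symm

theorem Submodule.exists_apply_ne_zero_of_span_eq_top {R M N ι : Type*} [Semiring R]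
    [AddCommMonoid M] [AddCommMonoid N] [Module R M] [Module R N] {v : ι → M}
    (hv : Submodule.span R (Set.range v) = ⊤) {f : M →ₗ[R] N} {x : M} (hx : f x ≠ 0) :
    ∃ i, f (v i) ≠ 0 := by
  by_contra! h
  exact hx (by rw [LinearMap.ext_on_range (g := 0) hv h]; rfl)

theorem Matrix.sum_vecMulVec_star_eq_one {n R : Type*} [Fintype n] [DecidableEq n] [CommRing R]
    [StarRing R] (e : n → n → R)
    (he : ∀ i j, ∑ p, star (e i p) * e j p = if i = j then 1 else 0) :
    ∑ m, vecMulVec (e m) (star (e m)) = 1 := by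
  have h : (of e).map star * (of e)ᵀ = 1 := by
    ext i j; simp [mul_apply, he, one_apply]
  rw [mul_eq_one_comm] at h
  ext i j
  simpa [mul_apply, sum_apply, vecMulVec_apply] using congrFun (congrFun h i) j

theorem Matrix.vecMulVec_star_eq_single {n R : Type*} [Fintype n] [DecidableEq n] [CommRing R]
    [StarRing R] {v : n → R} (hv : ∑ p, star (v p) * v p = 1) {l : n}
    (hl : ∀ i, i ≠ l → v i = 0) :
    vecMulVec v (star v) = single l l 1 := by
  rw [Fintype.sum_eq_single l fun i hi => by simp [hl i hi]] at hv
  ext i j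
  rcases eq_or_ne i l with rfl | hi
  · rcases eq_or_ne j i with rfl | hj
    · simpa [vecMulVec_apply, mul_comm] using hv
    · simp [vecMulVec_apply, hl j hj, hj.symm]
  · simp [vecMulVec_apply, hl i hi, hi.symm]

theorem Matrix.apply_eq_zero_iff_of_vecMulVec_eq_smul {m n K : Type*} [Field K]
    {x : m → K} {z : n → K} {N : Matrix m n K} {α : K} (h : vecMulVec x z = α • N)
    {i : m} {c : n} (hic : x i * z c ≠ 0) (i' : m) : x i' = 0 ↔ N i' c = 0 := by
  have hα : α ≠ 0 := by
    rintro rfl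
    exact hic (by simpa [vecMulVec_apply] using congrFun (congrFun h i) c)
  have hi' : x i' * z c = α * N i' c := by
    simpa [vecMulVec_apply] using congrFun (congrFun h i') c
  rw [← mul_eq_zero_iff_right (right_ne_zero_of_mul hic), hi', mul_eq_zero_iff_left hα]

theorem Matrix.exists_forall_apply_eq_zero_iff_of_span_eq_top {m n p ι K : Type*} [Fintype n]
    [DecidableEq n] [DecidableEq p] [Field K] {B : ι → Matrix n p K}
    (hB : Submodule.span K (Set.range B) = ⊤)
    {x : m → K} {w : n → K} {i : m} {j : n} (hij : x i * w j ≠ 0) {N : ι → Matrix m p K}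
    (hN : ∀ b, ∃ α : K, vecMulVec x w * B b = α • N b) (c : p) :
    ∃ b, ∀ i', x i' = 0 ↔ N b i' c = 0 := by
  -- `vecMulVec x w * single j c 1` has `(i, c)` entry `x i * w j ≠ 0`
  obtain ⟨b, hb⟩ := Submodule.exists_apply_ne_zero_of_span_eq_top hB
    (f := entryLinearMap K K i c ∘ₗ mulLeftLinearMap p K (vecMulVec x w)) (x := single j c 1)
    (by simpa [vecMulVec_apply] using hij)
  obtain ⟨α, hα⟩ := hN b
  simp only [LinearMap.comp_apply, mulLeftLinearMap_apply, entryLinearMap_apply,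
    vecMulVec_mul] at hb
  rw [vecMulVec_mul] at hα
  exact ⟨b, apply_eq_zero_iff_of_vecMulVec_eq_smul hα hb⟩

theorem span_range_eq_top_of_sum_dop_eq_one {X : Type*} [Fintype X]
    {A : X → Matrix (Fin 2) (Fin 2) ℂ} (hA : ∑ a, dop (A a) = 1) :
    Submodule.span ℂ (Set.range A) = ⊤ := by
  refine Submodule.eq_top_iff'.mpr fun C => ?_
  have hC : C = ∑ a, (∑ q : Fin 2 × Fin 2, star (A a q.1 q.2) * C q.1 q.2) • A a := by
    ext i j
    calc C i j = ∑ q : Fin 2 × Fin 2, (1 : Matrix _ _ ℂ) (i, j) q * C q.1 q.2 := by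
          simp [one_apply]
      _ = ∑ a, (∑ q : Fin 2 × Fin 2, star (A a q.1 q.2) * C q.1 q.2) * A a i j := by
          simp only [← hA, Matrix.sum_apply, dop, of_apply, Finset.sum_mul]
          rw [Finset.sum_comm]
          exact Finset.sum_congr rfl fun _ _ => Finset.sum_congr rfl fun _ _ => by ring
      _ = _ := by simp [Matrix.sum_apply]
  rw [hC]
  exact Submodule.sum_mem _ fun a _ => Submodule.smul_mem _ _ (Submodule.subset_span ⟨a, rfl⟩)

theorem Matrix.pair_single_one_sub_single {R : Type*} [Ring R] (l : Fin 2) :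
    ({single l l 1, 1 - single l l 1} : Set (Matrix (Fin 2) (Fin 2) R)) =
      {!![1, 0; 0, 0], !![0, 0; 0, 1]} := by
  fin_cases l <;> simp [Set.pair_eq_pair_iff, ← Matrix.ext_iff, Fin.forall_fin_two, one_apply]

theorem Matrix.pair_vecMulVec_star_eq_of_apply_eq_zero {R : Type*} [CommRing R] [StarRing R]
    (e : Fin 2 → Fin 2 → R)
    (he : ∀ i j, ∑ p, star (e i p) * e j p = if i = j then 1 else 0) {m l : Fin 2}
    (hml : e m l = 0) :
    ({vecMulVec (e 0) (star (e 0)), vecMulVec (e 1) (star (e 1))} :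
      Set (Matrix (Fin 2) (Fin 2) R)) =
      {!![1, 0; 0, 0], !![0, 0; 0, 1]} := by
  have hsum := sum_vecMulVec_star_eq_one e he
  rw [Fin.sum_univ_two] at hsum
  have hpair : ∀ m, ({vecMulVec (e 0) (star (e 0)), vecMulVec (e 1) (star (e 1))} : Set _) =
      {vecMulVec (e m) (star (e m)), 1 - vecMulVec (e m) (star (e m))} := by
    rw [Fin.forall_fin_two, ← hsum, add_sub_cancel_left, add_sub_cancel_right, Set.pair_comm]
    exact ⟨rfl, rfl⟩
  have hPm : vecMulVec (e m) (star (e m)) = single l.rev l.rev 1 :=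
    vecMulVec_star_eq_single (by simpa using he m m) fun i hi => by
      convert hml
      simp only [ne_eq, Fin.ext_iff, Fin.val_rev] at hi ⊢
      omega
  rw [hpair m, hPm, pair_single_one_sub_single]

def productFamily (e : Fin 2 → Fin 2 → ℂ) : Fin 4 → Matrix (Fin 2) (Fin 2) ℂ :=
  ![!![1, 0; 0, 0], !![0, 0; 1, 0],
    Matrix.of fun i j => e 0 i * (if j = 1 then 1 else 0),
    Matrix.of fun i j => e 1 i * (if j = 1 then 1 else 0)]

theorem productFamily_exists_apply_zero_eq_zero (e : Fin 2 → Fin 2 → ℂ) (k : Fin 4) :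
    ∃ l, productFamily e k l 0 = 0 := by
  fin_cases k
  exacts [⟨1, rfl⟩, ⟨0, rfl⟩, ⟨0, by simp [productFamily]⟩, ⟨0, by simp [productFamily]⟩]

theorem productFamily_col_one (e : Fin 2 → Fin 2 → ℂ) (k : Fin 4) :
    (productFamily e k).col 1 = 0 ∨ ∃ m, (productFamily e k).col 1 = e m := by
  fin_cases k
  exacts [.inl (by ext i; fin_cases i <;> rfl), .inl (by ext i; fin_cases i <;> rfl),
    .inr ⟨0, by ext i; simp [productFamily]⟩, .inr ⟨1, by ext i; simp [productFamily]⟩]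

theorem exists_apply_eq_zero_of_productFamily {e : Fin 2 → Fin 2 → ℂ} {x : Fin 2 → ℂ}
    (hx : x ≠ 0) (hcol : ∀ c, ∃ k, ∀ i, x i = 0 ↔ productFamily e k i c = 0) :
    ∃ m l, e m l = 0 := by
  obtain ⟨k₀, hk₀⟩ := hcol 0
  obtain ⟨l, hl⟩ := productFamily_exists_apply_zero_eq_zero e k₀
  obtain ⟨k₁, hk₁⟩ := hcol 1
  rcases productFamily_col_one e k₁ with h | ⟨m, hm⟩
  · exact absurd (funext fun i => (hk₁ i).mpr (congrFun h i)) hx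
  · exact ⟨m, l, congrFun hm l ▸ (hk₁ l).mp ((hk₀ l).mpr hl)⟩

theorem product_basis_localization_rank_one_case_general
    {X Y : Type} [Fintype X] [Fintype Y]
    (e : Fin 2 → Fin 2 → ℂ)
    (he : ∀ i j, ∑ p : Fin 2, star (e i p) * e j p = if i = j then 1 else 0)
    (M : Fin 4 → Matrix (Fin 2) (Fin 2) ℂ)
    (hM : M = ![!![1, 0; 0, 0], !![0, 0; 1, 0],
      Matrix.of fun i j => e 0 i * (if j = 1 then 1 else 0),
      Matrix.of fun i j => e 1 i * (if j = 1 then 1 else 0)])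
    (R : Matrix (Fin 2) (Fin 2) ℂ) (hR : R ≠ 0)
    (A : X → Matrix (Fin 2) (Fin 2) ℂ) (B : Y → Matrix (Fin 2) (Fin 2) ℂ)
    (f : X → Y → Fin 4)
    (hA : ∑ a, dop (A a) = 1) (hB : ∑ b, dop (B b) = 1)
    (hArk : ∀ a, (A a).rank = 1)
    (hloc : ∀ a b, ∃ α : ℂ, A a * R.map star * B b = α • M (f a b)) :
    ({Matrix.of fun i j => e 0 i * star (e 0 j),
      Matrix.of fun i j => e 1 i * star (e 1 j)} : Set (Matrix (Fin 2) (Fin 2) ℂ)) =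
      {!![1, 0; 0, 0], !![0, 0; 0, 1]} := by
  change M = productFamily e at hM
  subst hM
  have hR' : R.map star ≠ 0 := by
    rwa [Ne, ← conjTranspose_eq_zero, ← transpose_eq_zero] at hR
  obtain ⟨a, ha⟩ := Submodule.exists_apply_ne_zero_of_span_eq_top
    (span_range_eq_top_of_sum_dop_eq_one hA) (f := LinearMap.mulRight ℂ (R.map star)) (x := 1)
    (by simpa using hR')
  obtain ⟨x, y, hxy⟩ := (A a).exists_eq_vecMulVec_of_rank_le_one (hArk a).le
  have hT : A a * R.map star = vecMulVec x (y ᵥ* R.map star) := by rw [hxy, vecMulVec_mul]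
  obtain ⟨i, j, hij⟩ : ∃ i j, x i * (y ᵥ* R.map star) j ≠ 0 := by
    by_contra! h
    rw [LinearMap.mulRight_apply, hT] at ha
    exact ha (ext h)
  have hcol (c : Fin 2) : ∃ k, ∀ i', x i' = 0 ↔ productFamily e k i' c = 0 :=
    let ⟨b, hb⟩ := exists_forall_apply_eq_zero_iff_of_span_eq_top
      (span_range_eq_top_of_sum_dop_eq_one hB) hij (fun b => hT ▸ hloc a b) c
    ⟨f a b, hb⟩
  obtain ⟨m, l, hml⟩ :=
    exists_apply_eq_zero_of_productFamily (left_ne_zero_of_mul hij ∘ (congrFun · i)) hcol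
  exact pair_vecMulVec_star_eq_of_apply_eq_zero e he hml

/-- If rank-1 families `{A_a}`, `{B_b}` of `2×2` matrices are complete POVMs (in double-ket
form), `R` is a nonzero `2×2` matrix, and `A_a R* B_b ∝ M_{f(a,b)}` for the product family
`{Mᵢ} = {|0⟩⟨0|, |1⟩⟨0|, |e₀⟩⟨1|, |e₁⟩⟨1|}`, then
`{|e₀⟩⟨e₀|, |e₁⟩⟨e₁|} = {|0⟩⟨0|, |1⟩⟨1|}`. -/
theorem product_basis_localization_rank_one_case
    {X Y : Type} [Fintype X] [Fintype Y]
    (e : Fin 2 → Fin 2 → ℂ)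
    (he : ∀ i j, ∑ p : Fin 2, star (e i p) * e j p = if i = j then 1 else 0)
    (M : Fin 4 → Matrix (Fin 2) (Fin 2) ℂ)
    (hM : M = ![!![1, 0; 0, 0], !![0, 0; 1, 0],
      Matrix.of fun i j => e 0 i * (if j = 1 then 1 else 0),
      Matrix.of fun i j => e 1 i * (if j = 1 then 1 else 0)])
    (R : Matrix (Fin 2) (Fin 2) ℂ) (hR : R ≠ 0)
    (A : X → Matrix (Fin 2) (Fin 2) ℂ) (B : Y → Matrix (Fin 2) (Fin 2) ℂ)
    (f : X → Y → Fin 4)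
    (hA : ∑ a, dop (A a) = 1) (hB : ∑ b, dop (B b) = 1)
    (hArk : ∀ a, (A a).rank = 1) (hBrk : ∀ b, (B b).rank = 1)
    (hloc : ∀ a b, ∃ α : ℂ, A a * R.map star * B b = α • M (f a b)) :
    ({Matrix.of fun i j => e 0 i * star (e 0 j),
      Matrix.of fun i j => e 1 i * star (e 1 j)} : Set (Matrix (Fin 2) (Fin 2) ℂ)) =
      {!![1, 0; 0, 0], !![0, 0; 0, 1]} :=
  product_basis_localization_rank_one_case_general e he M hM R hR A B f hA hB hArk hloc
end
end
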